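/- Define f : ℝ → ℝ by f(x) = |x| if |x| ≤ 1 and f(x) = 1 if |x| > 1, and let W : ℝ → ℝ be the 1-periodic function with W(y) = 1/2 − |y| for y ∈ [−1/2, 1/2]. Then for every λ, ε ∈ (0,1) and every locally absolutely continuous curve η : [0,∞) → ℝ, one has ∫₀^∞ e^{−λs} ( f(η(s)) + W(η(s)/ε) + |η̇(s)|²/2 ) ds ≥ ε / (2λ), the integral being well defined in [0,∞] since the integrand is nonnegative. -/

import Mathlib

open MeasureTheory Real Set

noncomputable section

/-- `f(x) = |x|` for `|x| ≤ 1`, and `f(x) = 1` for `|x| > 1`. -/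
def f (x : ℝ) : ℝ := if |x| ≤ 1 then |x| else 1

/-- The 1-periodic extension of `y ↦ 1/2 − |y|` from `[−1/2, 1/2]`; equivalently
`W(y) = 1/2 − dist(y, ℤ)`. -/
def W (y : ℝ) : ℝ := 1/2 - |y - round y|

/-- `η : [a,b] → ℝ` is absolutely continuous with (a.e.) derivative `η'`. -/
def IsAC1 (a b : ℝ) (η η' : ℝ → ℝ) : Prop :=
  IntegrableOn η' (Icc a b) volume ∧
    ∀ c d : ℝ, a ≤ c → c ≤ d → d ≤ b → η d - η c = ∫ s in c..d, η' s

/-! The running cost is bounded below pointwise, whatever the curve: far from the origin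
(`|x| ≥ ε/2`) the term `f` already costs `ε/2`, while near it `x/ε` lies in the central cell
of the oscillating potential, where `f + W(·/ε)` is affine in `|x|` with value `1/2` at `0`
and `ε/2` at `|x| = ε/2`. Integrating `ε/2` against the discount `e^{-λs}` gives `ε/(2λ)`. -/

lemma W_nonneg (y : ℝ) : 0 ≤ W y := by
  have := abs_sub_round y
  rw [W]
  linarith

lemma W_of_abs_lt_half {y : ℝ} (hy : |y| < 1 / 2) : W y = 1 / 2 - |y| := by
  have hround : round y = 0 := by
    rw [round_eq_zero_iff]
    constructor <;> linarith [abs_lt.mp hy]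
  rw [W, hround, Int.cast_zero, sub_zero]

lemma half_le_f_add_W_div {ε : ℝ} (hε : 0 < ε) (hε1 : ε ≤ 1) (x : ℝ) :
    ε / 2 ≤ f x + W (x / ε) := by
  rcases le_or_gt (ε / 2) |x| with hfar | hnear
  · have hf : ε / 2 ≤ f x := by
      unfold f
      split_ifs <;> linarith
    linarith [W_nonneg (x / ε)]
  · have hscaled : |x / ε| = |x| / ε := by rw [abs_div, abs_of_pos hε]
    have hcell : |x / ε| < 1 / 2 := by
      rw [hscaled, div_lt_iff₀ hε]
      linarith
    have hf : f x = |x| := if_pos (by linarith)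
    rw [hf, W_of_abs_lt_half hcell, hscaled]
    have hε_mul : |x| / ε * ε = |x| := div_mul_cancel₀ _ hε.ne'
    nlinarith [abs_nonneg x]

lemma lintegral_ofReal_exp_neg_mul_mul_Ioi {lam c : ℝ} (hlam : 0 < lam) (hc : 0 ≤ c) :
    ∫⁻ s in Ioi (0:ℝ), ENNReal.ofReal (exp (-lam * s) * c) = ENNReal.ofReal (c / lam) := by
  have hint : IntegrableOn (fun s => exp (-lam * s) * c) (Ioi 0) :=
    (exp_neg_integrableOn_Ioi 0 hlam).mul_const c
  rw [← ofReal_integral_eq_lintegral_ofReal hint (Filter.Eventually.of_forall fun s => by positivity),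
    integral_mul_const, integral_exp_mul_Ioi (neg_lt_zero.mpr hlam)]
  congr 1
  field_simp
  simp

/-- Proposition 4.4(ii) (variational content): every locally absolutely continuous
curve pays discounted cost at least `ε/(2λ)`.  The integral is taken in `[0,∞]`
since the integrand is nonnegative. -/
theorem stmt_12 :
    ∀ lam ε : ℝ, 0 < lam → lam < 1 → 0 < ε → ε < 1 →
      ∀ η η' : ℝ → ℝ, (∀ T : ℝ, 0 < T → IsAC1 0 T η η') →
        ENNReal.ofReal (ε / (2 * lam)) ≤
          ∫⁻ s in Ioi (0:ℝ),
            ENNReal.ofReal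
              (Real.exp (-lam * s) * (f (η s) + W (η s / ε) + |η' s| ^ 2 / 2)) := by
  intro lam ε hlam _ hε hε1 η η' _
  calc ENNReal.ofReal (ε / (2 * lam))
      = ∫⁻ s in Ioi (0:ℝ), ENNReal.ofReal (exp (-lam * s) * (ε / 2)) := by
        rw [lintegral_ofReal_exp_neg_mul_mul_Ioi hlam (by positivity), div_div]
    _ ≤ _ := by
        refine lintegral_mono fun s => ENNReal.ofReal_le_ofReal ?_
        refine mul_le_mul_of_nonneg_left ?_ (exp_nonneg _)
        have := half_le_f_add_W_div hε hε1.le (η s)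
        linarith [sq_nonneg |η' s|]
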